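/- Let (V, e) be an absolute order unit space and let u, v ∈ V with 0 ≤ u ≤ e and 0 ≤ v ≤ e. Then the following are equivalent: (1) u is absolutely compatible with v; (2) u ∧̇ v ∈ V⁺ and (e − u) ∧̇ (e − v) ∈ V⁺ with u ∧̇ v ⊥ (e − u) ∧̇ (e − v); (3) u ∧̇ (e − v) ∈ V⁺ and (e − u) ∧̇ v ∈ V⁺ with u ∧̇ (e − v) ⊥ (e − u) ∧̇ v. -/

import Mathlib

/-- The data of an *absolutely ordered space* on a real ordered vector space `V`:
a positive cone (given by the order, compatible with scalars and generating)
together with an absolute value map `|·| : V → V⁺` satisfying conditions (a)–(e). -/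
structure AbsOrderedData (V : Type*) [AddCommGroup V] [PartialOrder V] [IsOrderedAddMonoid V] [Module ℝ V] : Type _ where
  /-- the absolute value map -/
  vabs : V → V
  /-- the cone is closed under multiplication by nonnegative scalars -/
  smul_nonneg : ∀ (k : ℝ) (v : V), 0 ≤ k → 0 ≤ v → 0 ≤ k • v
  /-- the cone is generating -/
  generating : ∀ v : V, ∃ a b : V, 0 ≤ a ∧ 0 ≤ b ∧ v = a - b
  /-- `|·|` takes values in the cone -/
  abs_mem : ∀ v : V, 0 ≤ vabs v
  /-- (a) `|v| = v` for `v ∈ V⁺` -/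
  abs_of_nonneg : ∀ v : V, 0 ≤ v → vabs v = v
  /-- (b) `|v| + v ∈ V⁺` -/
  abs_add_nonneg : ∀ v : V, 0 ≤ vabs v + v
  /-- (b) `|v| − v ∈ V⁺` -/
  abs_sub_nonneg : ∀ v : V, 0 ≤ vabs v - v
  /-- (c) `|k • v| = |k| • |v|` -/
  abs_smul : ∀ (k : ℝ) (v : V), vabs (k • v) = |k| • vabs v
  /-- (d) if `|u − v| = u + v` and `0 ≤ w ≤ v` then `|u − w| = u + w` -/
  orth_of_le : ∀ u v w : V, vabs (u - v) = u + v → 0 ≤ w → w ≤ v → vabs (u - w) = u + w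
  /-- (e), `+` case -/
  orth_add : ∀ u v w : V, vabs (u - v) = u + v → vabs (u - w) = u + w →
    vabs (u - (v + w)) = u + vabs (v + w)
  /-- (e), `−` case -/
  orth_sub : ∀ u v w : V, vabs (u - v) = u + v → vabs (u - w) = u + w →
    vabs (u - (v - w)) = u + vabs (v - w)

namespace AbsOrderedData

variable {V : Type*} [AddCommGroup V] [PartialOrder V] [IsOrderedAddMonoid V] [Module ℝ V]

/-- `e` is an order unit for `V`. -/
def IsOrderUnit (e : V) : Prop :=
  ∀ v : V, ∃ k : ℝ, 0 < k ∧ -(k • e) ≤ v ∧ v ≤ k • e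

/-- The order unit (semi)norm `‖v‖ = inf {k > 0 : −k•e ≤ v ≤ k•e}` determined by `e`. -/
noncomputable def ounorm (e : V) (v : V) : ℝ :=
  sInf {k : ℝ | 0 < k ∧ -(k • e) ≤ v ∧ v ≤ k • e}

/-- `u ⊥ v` : `|u − v| = u + v`. -/
def orth (D : AbsOrderedData V) (u v : V) : Prop :=
  D.vabs (u - v) = u + v

/-- `u ⊥∞ v` : `‖α•u + β•v‖ = max ‖α•u‖ ‖β•v‖` for all real `α, β`. -/
def orthInfty (e u v : V) : Prop :=
  ∀ α β : ℝ, ounorm e (α • u + β • v) = max (ounorm e (α • u)) (ounorm e (β • v))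

/-- `u ⊥∞ᵃ v` : `u₁ ⊥∞ v₁` whenever `0 ≤ u₁ ≤ u` and `0 ≤ v₁ ≤ v`. -/
def orthInftyAbs (e u v : V) : Prop :=
  ∀ u₁ v₁ : V, 0 ≤ u₁ → u₁ ≤ u → 0 ≤ v₁ → v₁ ≤ v → orthInfty e u₁ v₁

/-- The cone `V⁺` is closed with respect to the order unit norm determined by `e`. -/
def PosConeClosed (e : V) : Prop :=
  ∀ v : V, (∀ ε : ℝ, 0 < ε → ∃ w : V, 0 ≤ w ∧ ounorm e (v - w) < ε) → 0 ≤ v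

/-- `(V, e)` is an *absolute order unit space*: an absolutely ordered space with an order
unit `e`, a norm-closed cone, and `⊥ = ⊥∞ᵃ` on the cone. -/
structure IsAbsOrderUnitSpace (D : AbsOrderedData V) (e : V) : Prop where
  isOrderUnit : IsOrderUnit e
  posConeClosed : PosConeClosed e
  orth_iff_orthInftyAbs : ∀ u v : V, 0 ≤ u → 0 ≤ v → (D.orth u v ↔ orthInftyAbs e u v)

/-- `u ∧̇ v = (1/2)(u + v − |u − v|)`. -/
noncomputable def wedge (D : AbsOrderedData V) (u v : V) : V :=
  (2⁻¹ : ℝ) • (u + v - D.vabs (u - v))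

/-- `u ∨̇ v = (1/2)(u + v + |u − v|)`. -/
noncomputable def vee (D : AbsOrderedData V) (u v : V) : V :=
  (2⁻¹ : ℝ) • (u + v + D.vabs (u - v))

/-- `p` is an *order projection*: `0 ≤ p ≤ e` and `p ⊥ (e − p)`. -/
def IsOP (D : AbsOrderedData V) (e p : V) : Prop :=
  0 ≤ p ∧ p ≤ e ∧ D.orth p (e - p)

/-- `u` and `v` are *absolutely compatible*: `|u − v| + |u + v − e| = e`. -/
def AbsCompat (D : AbsOrderedData V) (e u v : V) : Prop :=
  D.vabs (u - v) + D.vabs (u + v - e) = e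

end AbsOrderedData
open AbsOrderedData in
/-- In an absolute order unit space `(V, e)`, for `u, v ∈ [0, e]`
the three conditions (1)–(3) relating absolute compatibility, `∧̇` and `⊥` are
equivalent. -/
theorem absolutely_compatible_iff_wedge_orth {V : Type*} [AddCommGroup V] [PartialOrder V] [IsOrderedAddMonoid V]
    [Module ℝ V] (D : AbsOrderedData V) (e : V) (hV : D.IsAbsOrderUnitSpace e)
    (u v : V) (hu0 : 0 ≤ u) (hue : u ≤ e) (hv0 : 0 ≤ v) (hve : v ≤ e) :
    (D.AbsCompat e u v ↔
      (0 ≤ D.wedge u v ∧ 0 ≤ D.wedge (e - u) (e - v) ∧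
        D.orth (D.wedge u v) (D.wedge (e - u) (e - v)))) ∧
    ((0 ≤ D.wedge u v ∧ 0 ≤ D.wedge (e - u) (e - v) ∧
        D.orth (D.wedge u v) (D.wedge (e - u) (e - v))) ↔
      (0 ≤ D.wedge u (e - v) ∧ 0 ≤ D.wedge (e - u) v ∧
        D.orth (D.wedge u (e - v)) (D.wedge (e - u) v))) := by
  classical
  have habs_neg : ∀ x : V, D.vabs (-x) = D.vabs x := by
    intro x
    have h := D.abs_smul (-1) x
    simpa using h
  set A := D.vabs (u - v) with hA
  set B := D.vabs (u + v - e) with hB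
  have hA' : D.vabs ((e - u) - (e - v)) = A := by
    rw [show (e - u) - (e - v) = -(u - v) by abel, habs_neg]
  have hB' : D.vabs (u - (e - v)) = B := by
    rw [show u - (e - v) = u + v - e by abel]
  have hB'' : D.vabs ((e - u) - v) = B := by
    rw [show (e - u) - v = -(u + v - e) by abel, habs_neg]
  have hw1 : D.wedge u v = (2⁻¹ : ℝ) • (u + v - A) := rfl
  have hw2 : D.wedge (e - u) (e - v) = (2⁻¹ : ℝ) • ((e - u) + (e - v) - A) := by
    rw [wedge, hA']
  have hw3 : D.wedge u (e - v) = (2⁻¹ : ℝ) • (u + (e - v) - B) := by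
    rw [wedge, hB']
  have hw4 : D.wedge (e - u) v = (2⁻¹ : ℝ) • ((e - u) + v - B) := by
    rw [wedge, hB'']
  -- algebra for condition (2)
  have hsub2 : D.wedge u v - D.wedge (e - u) (e - v) = u + v - e := by
    rw [hw1, hw2]; module
  have hadd2 : D.wedge u v + D.wedge (e - u) (e - v) = e - A := by
    rw [hw1, hw2]; module
  -- algebra for condition (3)
  have hsub3 : D.wedge u (e - v) - D.wedge (e - u) v = u - v := by
    rw [hw3, hw4]; module
  have hadd3 : D.wedge u (e - v) + D.wedge (e - u) v = e - B := by
    rw [hw3, hw4]; module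
  have horth2 : D.orth (D.wedge u v) (D.wedge (e - u) (e - v)) ↔ D.AbsCompat e u v := by
    rw [AbsOrderedData.orth, AbsOrderedData.AbsCompat, hsub2, hadd2, ← hA, ← hB]
    constructor
    · intro h; rw [h]; abel
    · intro h; rw [← h]; abel
  have horth3 : D.orth (D.wedge u (e - v)) (D.wedge (e - u) v) ↔ D.AbsCompat e u v := by
    rw [AbsOrderedData.orth, AbsOrderedData.AbsCompat, hsub3, hadd3, ← hA, ← hB]
    constructor
    · intro h; rw [h]; abel
    · intro h; rw [← h]; abel
  -- positivity consequences of AbsCompat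
  have half_nonneg : (0 : ℝ) ≤ 2⁻¹ := by norm_num
  have hpos : D.AbsCompat e u v →
      0 ≤ D.wedge u v ∧ 0 ≤ D.wedge (e - u) (e - v) ∧
      0 ≤ D.wedge u (e - v) ∧ 0 ≤ D.wedge (e - u) v := by
    intro h
    have hABe : A + B = e := h
    have hBe : B = e - A := by rw [← hABe]; abel
    have hAe : A = e - B := by rw [← hABe]; abel
    have h1 := D.abs_add_nonneg (u + v - e)
    have h2 := D.abs_sub_nonneg (u + v - e)
    have h3 := D.abs_add_nonneg (u - v)
    have h4 := D.abs_sub_nonneg (u - v)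
    rw [← hB, hBe] at h1 h2
    rw [← hA, hAe] at h3 h4
    refine ⟨?_, ?_, ?_, ?_⟩
    · rw [hw1]
      refine D.smul_nonneg _ _ half_nonneg ?_
      rwa [show u + v - A = e - A + (u + v - e) by abel]
    · rw [hw2]
      refine D.smul_nonneg _ _ half_nonneg ?_
      rwa [show (e - u) + (e - v) - A = e - A - (u + v - e) by abel]
    · rw [hw3]
      refine D.smul_nonneg _ _ half_nonneg ?_
      rwa [show u + (e - v) - B = e - B + (u - v) by abel]
    · rw [hw4]
      refine D.smul_nonneg _ _ half_nonneg ?_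
      rwa [show (e - u) + v - B = e - B - (u - v) by abel]
  constructor
  · constructor
    · intro h
      obtain ⟨p1, p2, _, _⟩ := hpos h
      exact ⟨p1, p2, horth2.mpr h⟩
    · rintro ⟨-, -, ho⟩
      exact horth2.mp ho
  · constructor
    · rintro ⟨-, -, ho⟩
      have h := horth2.mp ho
      obtain ⟨_, _, p3, p4⟩ := hpos h
      exact ⟨p3, p4, horth3.mpr h⟩
    · rintro ⟨-, -, ho⟩
      have h := horth3.mp ho
      obtain ⟨p1, p2, _, _⟩ := hpos h
      exact ⟨p1, p2, horth2.mpr h⟩
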